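/- The variance of the number of nontrivial returns of a uniformly random Dyck path of length 2n equals 2n(n-1)(2n+1)/((n+2)^2 (n+3)). -/

import Mathlib

open Finset
open scoped Classical

/-- number of up-steps among the first `m` steps of `p` (`true` = up-step `(1,1)`). -/
def upCount {N : ℕ} (p : Fin N → Bool) (m : ℕ) : ℕ :=
  (Finset.univ.filter fun i : Fin N => (i : ℕ) < m ∧ p i = true).card

/-- number of down-steps among the first `m` steps of `p` (`false` = down-step `(1,-1)`). -/
def downCount {N : ℕ} (p : Fin N → Bool) (m : ℕ) : ℕ :=
  (Finset.univ.filter fun i : Fin N => (i : ℕ) < m ∧ p i = false).card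

/-- `p` is a Dyck path: it stays weakly above the x-axis and ends on the x-axis. -/
def IsDyck {N : ℕ} (p : Fin N → Bool) : Prop :=
  (∀ m : ℕ, downCount p m ≤ upCount p m) ∧ upCount p N = downCount p N

/-- Dyck paths of length `2n`. -/
noncomputable def dyckPaths (n : ℕ) : Finset (Fin (2 * n) → Bool) :=
  Finset.univ.filter fun p => IsDyck p

/-- number of nontrivial returns of `p`: interior points where the path meets the x-axis. -/
def returns {N : ℕ} (p : Fin N → Bool) : ℕ :=
  ((Finset.Ioo 0 N).filter fun m => upCount p m = downCount p m).card

/-!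
Cutting a Dyck path at a nontrivial return is a bijection onto pairs of nonempty Dyck paths
of complementary semilengths, so the total number of returns over all `C_n` paths of
semilength `n` is `∑_{0<k<n} C_k C_{n-k} = C_{n+1} - 2 C_n`. For the second moment write
`r² = r + 2 #{pairs of returns m' < m}`: cutting at `m`, the return `m'` becomes a return of the first
piece, so the pairs are counted by `∑_{0<k<n} (C_{k+1} - 2 C_k) C_{n-k}`, and the Catalan
recurrence gives `∑ r² = 2 C_{n+2} - 7 C_{n+1} + 4 C_n`. The variance then follows from
`(n + 2) C_{n+1} = 2 (2n + 1) C_n`.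
-/

open DyckStep

theorem List.count_take_ofFn {α : Type*} [DecidableEq α] {N : ℕ} (f : Fin N → α) (a : α)
    (m : ℕ) : ((List.ofFn f).take m).count a = #{i : Fin N | (i : ℕ) < m ∧ f i = a} := by
  induction N generalizing m with
  | zero => simp
  | succ N ih =>
    cases m with
    | zero => simp
    | succ m =>
      rw [List.ofFn_succ, List.take_succ_cons, List.count_cons, ih, Fin.card_filter_univ_succ']
      simp [add_comm]

def toSteps {N : ℕ} (p : Fin N → Bool) : List DyckStep :=
  List.ofFn fun i => if p i then U else D

lemma length_toSteps {N : ℕ} (p : Fin N → Bool) : (toSteps p).length = N :=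
  List.length_ofFn

lemma toSteps_injective {N : ℕ} : Function.Injective (toSteps (N := N)) := by
  intro p q h
  funext i
  have := congrFun (List.ofFn_injective h) i
  cases hp : p i <;> cases hq : q i <;> simp_all

lemma exists_toSteps_eq {N : ℕ} {l : List DyckStep} (hl : l.length = N) :
    ∃ p : Fin N → Bool, toSteps p = l := by
  subst hl
  refine ⟨fun i => l[(i : ℕ)] = U, ?_⟩
  conv_rhs => rw [← List.ofFn_getElem (xs := l)]
  refine congrArg List.ofFn (funext fun i => ?_)
  rcases l[(i : ℕ)].dichotomy with h | h <;> simp [h]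

lemma upCount_eq_count_take {N : ℕ} (p : Fin N → Bool) (m : ℕ) :
    upCount p m = ((toSteps p).take m).count U := by
  simp [upCount, toSteps, List.count_take_ofFn]

lemma downCount_eq_count_take {N : ℕ} (p : Fin N → Bool) (m : ℕ) :
    downCount p m = ((toSteps p).take m).count D := by
  simp [downCount, toSteps, List.count_take_ofFn]

lemma isDyck_iff_exists_dyckWord {N : ℕ} (p : Fin N → Bool) :
    IsDyck p ↔ ∃ w : DyckWord, w.toList = toSteps p := by
  have htake : (toSteps p).take N = toSteps p := List.take_of_length_le (length_toSteps p).le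
  simp only [IsDyck, upCount_eq_count_take, downCount_eq_count_take, htake]
  constructor
  · rintro ⟨hle, heq⟩
    exact ⟨⟨toSteps p, heq, hle⟩, rfl⟩
  · rintro ⟨w, hw⟩
    exact hw ▸ ⟨w.count_D_le_count_U, w.count_U_eq_count_D⟩

def returnPoints (l : List DyckStep) : Finset ℕ :=
  {m ∈ Ioo 0 l.length | (l.take m).count U = (l.take m).count D}

lemma mem_returnPoints {l : List DyckStep} {m : ℕ} :
    m ∈ returnPoints l ↔ (0 < m ∧ m < l.length) ∧ (l.take m).count U = (l.take m).count D := by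
  rw [returnPoints, mem_filter, mem_Ioo]

lemma returns_eq_card_returnPoints {N : ℕ} (p : Fin N → Bool) :
    returns p = #(returnPoints (toSteps p)) := by
  simp only [returns, returnPoints, length_toSteps, upCount_eq_count_take,
    downCount_eq_count_take]

lemma returnPoints_take {l : List DyckStep} {m : ℕ} (hm : m ≤ l.length) :
    returnPoints (l.take m) = {j ∈ returnPoints l | j < m} := by
  ext j
  simp only [mem_returnPoints, mem_filter, List.length_take, List.take_take]
  constructor
  · rintro ⟨⟨hj0, hjm⟩, hbal⟩
    rw [min_eq_left (by omega)] at hbal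
    exact ⟨⟨⟨hj0, by omega⟩, hbal⟩, by omega⟩
  · rintro ⟨⟨⟨hj0, hjl⟩, hbal⟩, hjm⟩
    rw [min_eq_left hjm.le]
    exact ⟨⟨hj0, by omega⟩, hbal⟩

def dyckLists (n : ℕ) : Finset (List DyckStep) :=
  univ.map ⟨fun w : {w : DyckWord // w.semilength = n} => w.1.toList,
    fun _ _ h => Subtype.ext (DyckWord.ext h)⟩

lemma mem_dyckLists {n : ℕ} {l : List DyckStep} :
    l ∈ dyckLists n ↔ ∃ w : DyckWord, w.semilength = n ∧ w.toList = l := by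
  simp only [dyckLists, mem_map, mem_univ, true_and]
  exact ⟨fun ⟨w, hw⟩ => ⟨w.1, w.2, hw⟩, fun ⟨w, hw, h⟩ => ⟨⟨w, hw⟩, h⟩⟩

lemma card_dyckLists (n : ℕ) : #(dyckLists n) = catalan n := by
  rw [dyckLists, card_map, card_univ, DyckWord.card_dyckWord_semilength_eq_catalan]

lemma length_of_mem_dyckLists {n : ℕ} {l : List DyckStep} (hl : l ∈ dyckLists n) :
    l.length = 2 * n := by
  obtain ⟨w, rfl, rfl⟩ := mem_dyckLists.mp hl
  exact w.two_mul_semilength_eq_length.symm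

lemma dyckLists_eq_image (n : ℕ) : dyckLists n = (dyckPaths n).image toSteps := by
  ext l
  simp only [mem_dyckLists, mem_image, dyckPaths, mem_filter, mem_univ, true_and,
    isDyck_iff_exists_dyckWord]
  constructor
  · rintro ⟨w, hw, rfl⟩
    obtain ⟨p, hp⟩ := exists_toSteps_eq (N := 2 * n)
      (by rw [← DyckWord.two_mul_semilength_eq_length, hw])
    exact ⟨p, ⟨w, hp.symm⟩, hp⟩
  · rintro ⟨p, ⟨w, hw⟩, rfl⟩
    refine ⟨w, ?_, hw⟩
    have h := w.two_mul_semilength_eq_length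
    rw [hw, length_toSteps] at h
    omega

lemma card_dyckPaths (n : ℕ) : #(dyckPaths n) = catalan n := by
  rw [← card_dyckLists, dyckLists_eq_image, card_image_of_injective _ toSteps_injective]

lemma sum_dyckPaths_returns {M : Type*} [AddCommMonoid M] (n : ℕ) (f : ℕ → M) :
    ∑ p ∈ dyckPaths n, f (returns p) = ∑ l ∈ dyckLists n, f #(returnPoints l) := by
  rw [dyckLists_eq_image, sum_image fun p _ q _ h => toSteps_injective h]
  simp only [returns_eq_card_returnPoints]

lemma append_mem_dyckLists {k j : ℕ} {a b : List DyckStep} (ha : a ∈ dyckLists k)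
    (hb : b ∈ dyckLists j) : a ++ b ∈ dyckLists (k + j) := by
  obtain ⟨v, rfl, rfl⟩ := mem_dyckLists.mp ha
  obtain ⟨w, rfl, rfl⟩ := mem_dyckLists.mp hb
  exact mem_dyckLists.mpr ⟨v + w, DyckWord.semilength_add, rfl⟩

lemma take_drop_mem_dyckLists {n m : ℕ} {l : List DyckStep} (hl : l ∈ dyckLists n)
    (hm : m ∈ returnPoints l) :
    l.take m ∈ dyckLists (m / 2) ∧ l.drop m ∈ dyckLists (n - m / 2) := by
  obtain ⟨w, rfl, rfl⟩ := mem_dyckLists.mp hl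
  obtain ⟨⟨-, hlt⟩, hbal⟩ := mem_returnPoints.mp hm
  have hlen : 2 * (w.take m hbal).semilength = m := by
    rw [DyckWord.two_mul_semilength_eq_length]
    exact List.length_take_of_le hlt.le
  have hsum : (w.take m hbal).semilength + (w.drop m hbal).semilength = w.semilength := by
    rw [← DyckWord.semilength_add]
    exact congrArg _ (DyckWord.ext (List.take_append_drop m w.toList))
  have hm2 : (w.take m hbal).semilength = m / 2 := by omega
  exact ⟨mem_dyckLists.mpr ⟨_, hm2, rfl⟩, mem_dyckLists.mpr ⟨w.drop m hbal, by omega, rfl⟩⟩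

lemma two_mul_div_two_of_mem_returnPoints {n m : ℕ} {l : List DyckStep}
    (hl : l ∈ dyckLists n) (hm : m ∈ returnPoints l) : 2 * (m / 2) = m := by
  rw [← length_of_mem_dyckLists (take_drop_mem_dyckLists hl hm).1]
  exact List.length_take_of_le (mem_returnPoints.mp hm).1.2.le

lemma mem_returnPoints_append {k j : ℕ} {a b : List DyckStep} (ha : a ∈ dyckLists k)
    (hb : b ∈ dyckLists j) (hk : 0 < k) (hj : 0 < j) : 2 * k ∈ returnPoints (a ++ b) := by
  have hal := length_of_mem_dyckLists ha
  have hbl := length_of_mem_dyckLists hb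
  obtain ⟨v, -, rfl⟩ := mem_dyckLists.mp ha
  rw [mem_returnPoints, List.length_append, List.take_left' hal]
  exact ⟨by omega, v.count_U_eq_count_D⟩

theorem sum_returnPoints_take_drop {M : Type*} [AddCommMonoid M] (n : ℕ)
    (F : List DyckStep → List DyckStep → M) :
    ∑ l ∈ dyckLists n, ∑ m ∈ returnPoints l, F (l.take m) (l.drop m) =
      ∑ k ∈ Ico 1 n, ∑ a ∈ dyckLists k, ∑ b ∈ dyckLists (n - k), F a b := by
  simp_rw [← sum_product']
  rw [sum_sigma', sum_sigma']
  refine sum_nbij' (fun x => ⟨x.2 / 2, (x.1.take x.2, x.1.drop x.2)⟩)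
    (fun y => ⟨y.2.1 ++ y.2.2, 2 * y.1⟩) ?_ ?_ ?_ ?_ ?_
  · intro x hx
    obtain ⟨hl, hm⟩ := mem_sigma.mp hx
    obtain ⟨⟨h0, hlt⟩, -⟩ := mem_returnPoints.mp hm
    have h2 := two_mul_div_two_of_mem_returnPoints hl hm
    rw [length_of_mem_dyckLists hl] at hlt
    simp only [mem_sigma, mem_Ico, mem_product]
    exact ⟨by omega, take_drop_mem_dyckLists hl hm⟩
  · rintro ⟨k, a, b⟩ hy
    simp only [mem_sigma, mem_Ico, mem_product] at hy ⊢
    obtain ⟨⟨hk1, hkn⟩, ha, hb⟩ := hy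
    refine ⟨?_, mem_returnPoints_append ha hb (by omega) (by omega)⟩
    simpa [Nat.add_sub_cancel' hkn.le] using append_mem_dyckLists ha hb
  · rintro ⟨l, m⟩ hx
    obtain ⟨hl, hm⟩ := mem_sigma.mp hx
    simp [two_mul_div_two_of_mem_returnPoints hl hm]
  · rintro ⟨k, a, b⟩ hy
    simp only [mem_sigma, mem_product] at hy
    have hal := length_of_mem_dyckLists hy.2.1
    simp [List.take_left' hal, List.drop_left' hal]
  · exact fun _ _ => rfl

theorem Finset.card_sq_eq_card_add_two_mul_sum {α : Type*} [LinearOrder α] (s : Finset α) :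
    #s ^ 2 = #s + 2 * ∑ b ∈ s, #{a ∈ s | a < b} := by
  induction s using Finset.induction_on_max with
  | empty => simp
  | insert c s hc ih =>
    have hcs : c ∉ s := fun h => lt_irrefl c (hc c h)
    have hlt_c : {a ∈ insert c s | a < c} = s := by
      rw [filter_insert, if_neg (lt_irrefl c), filter_true_of_mem hc]
    have hlt_b : ∀ b ∈ s, {a ∈ insert c s | a < b} = {a ∈ s | a < b} := fun b hb => by
      rw [filter_insert, if_neg (hc b hb).asymm]
    rw [card_insert_of_notMem hcs, sum_insert hcs, hlt_c,
      sum_congr rfl fun b hb => congrArg card (hlt_b b hb)]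
    nlinarith [ih]

lemma sum_card_returnPoints_eq_sum_catalan_mul (n : ℕ) :
    ∑ l ∈ dyckLists n, #(returnPoints l) = ∑ k ∈ Ico 1 n, catalan k * catalan (n - k) := by
  have h := sum_returnPoints_take_drop n (fun _ _ => 1)
  simpa only [← card_eq_sum_ones, sum_const, smul_eq_mul, card_dyckLists, mul_one] using h

lemma sum_sum_card_returnPoints_lt (n : ℕ) :
    ∑ l ∈ dyckLists n, ∑ m ∈ returnPoints l, #{j ∈ returnPoints l | j < m} =
      ∑ k ∈ Ico 1 n, (∑ a ∈ dyckLists k, #(returnPoints a)) * catalan (n - k) := by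
  have h := sum_returnPoints_take_drop n (fun a _ => #(returnPoints a))
  simp only [sum_const, smul_eq_mul, card_dyckLists, mul_comm (catalan _), ← sum_mul] at h
  rw [← h]
  refine sum_congr rfl fun l _ => sum_congr rfl fun m hm => ?_
  rw [returnPoints_take (mem_returnPoints.mp hm).1.2.le]

lemma sum_Ico_catalan_mul_catalan_add {n : ℕ} (hn : 1 ≤ n) :
    ∑ k ∈ Ico 1 n, catalan k * catalan (n - k) + 2 * catalan n = catalan (n + 1) := by
  rw [catalan_succ, Fin.sum_univ_eq_sum_range (fun i => catalan i * catalan (n - i)),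
    sum_range_succ, sum_range_eq_add_Ico _ hn]
  simp only [catalan_zero, Nat.sub_zero, Nat.sub_self]
  ring

lemma sum_Ico_catalan_succ_mul_catalan_add {n : ℕ} (hn : 1 ≤ n) :
    ∑ k ∈ Ico 1 n, catalan (k + 1) * catalan (n - k) + catalan n + 2 * catalan (n + 1) =
      catalan (n + 2) := by
  rw [← sum_Ico_catalan_mul_catalan_add (by omega : 1 ≤ n + 1),
    sum_eq_sum_Ico_succ_bot (by omega : 1 < n + 1), ← sum_Ico_add' _ 1 n 1]
  simp only [catalan_one, one_mul, Nat.add_sub_add_right, Nat.add_sub_cancel]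
  ring

lemma add_two_mul_catalan_succ (n : ℕ) :
    (n + 2) * catalan (n + 1) = 2 * (2 * n + 1) * catalan n := by
  refine Nat.eq_of_mul_eq_mul_left n.succ_pos ?_
  calc (n + 1) * ((n + 2) * catalan (n + 1))
      = (n + 1) * (n + 1).centralBinom := by rw [← succ_mul_catalan_eq_centralBinom]
    _ = 2 * (2 * n + 1) * n.centralBinom := Nat.succ_mul_centralBinom_succ n
    _ = (n + 1) * (2 * (2 * n + 1) * catalan n) := by
      rw [← succ_mul_catalan_eq_centralBinom]
      ring

lemma sum_card_returnPoints_eq_catalan {n : ℕ} (hn : 1 ≤ n) :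
    (∑ l ∈ dyckLists n, #(returnPoints l) : ℚ) = catalan (n + 1) - 2 * catalan n := by
  rw [← sum_Ico_catalan_mul_catalan_add hn, ← sum_card_returnPoints_eq_sum_catalan_mul]
  push_cast
  ring

lemma sum_card_returnPoints_sq_eq_catalan {n : ℕ} (hn : 1 ≤ n) :
    (∑ l ∈ dyckLists n, (#(returnPoints l) : ℚ) ^ 2) =
      2 * catalan (n + 2) - 7 * catalan (n + 1) + 4 * catalan n := by
  have hsq (l : List DyckStep) : (#(returnPoints l) : ℚ) ^ 2 =
      #(returnPoints l) + 2 * ∑ m ∈ returnPoints l, (#{j ∈ returnPoints l | j < m} : ℚ) := by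
    exact_mod_cast (returnPoints l).card_sq_eq_card_add_two_mul_sum
  have hpairs : (∑ l ∈ dyckLists n, ∑ m ∈ returnPoints l, (#{j ∈ returnPoints l | j < m} : ℚ)) =
      ∑ k ∈ Ico 1 n, (catalan (k + 1) * catalan (n - k) : ℚ) -
        2 * ∑ k ∈ Ico 1 n, (catalan k * catalan (n - k) : ℚ) := by
    have h := congrArg (Nat.cast (R := ℚ)) (sum_sum_card_returnPoints_lt n)
    push_cast at h
    rw [h, mul_sum, ← sum_sub_distrib]
    refine sum_congr rfl fun k hk => ?_
    rw [sum_card_returnPoints_eq_catalan (mem_Ico.mp hk).1]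
    ring
  have h1 : ∑ k ∈ Ico 1 n, (catalan k * catalan (n - k) : ℚ) + 2 * catalan n =
      catalan (n + 1) := by
    exact_mod_cast sum_Ico_catalan_mul_catalan_add hn
  have h2 : ∑ k ∈ Ico 1 n, (catalan (k + 1) * catalan (n - k) : ℚ) + catalan n +
      2 * catalan (n + 1) = catalan (n + 2) := by
    exact_mod_cast sum_Ico_catalan_succ_mul_catalan_add hn
  rw [sum_congr rfl fun l _ => hsq l, sum_add_distrib, ← mul_sum, hpairs,
    sum_card_returnPoints_eq_catalan hn]
  linear_combination 2 * h2 - 4 * h1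

/-- The variance of the number of nontrivial returns of a uniformly random Dyck path of
length `2n` equals `2n(n-1)(2n+1)/((n+2)²(n+3))`. -/
theorem variance_nontrivial_returns_dyck (n : ℕ) (hn : 1 ≤ n) :
    (∑ p ∈ dyckPaths n, (returns p : ℚ) ^ 2) / ((dyckPaths n).card : ℚ)
        - ((∑ p ∈ dyckPaths n, (returns p : ℚ)) / ((dyckPaths n).card : ℚ)) ^ 2
      = 2 * (n : ℚ) * ((n : ℚ) - 1) * (2 * (n : ℚ) + 1)
          / (((n : ℚ) + 2) ^ 2 * ((n : ℚ) + 3)) := by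
  rw [sum_dyckPaths_returns n (fun r => (r : ℚ) ^ 2), sum_dyckPaths_returns n (fun r => (r : ℚ)),
    sum_card_returnPoints_sq_eq_catalan hn, sum_card_returnPoints_eq_catalan hn, card_dyckPaths]
  have hC : (catalan n : ℚ) ≠ 0 := Nat.cast_ne_zero.mpr fun h =>
    n.centralBinom_ne_zero (by rw [← succ_mul_catalan_eq_centralBinom, h, mul_zero])
  have hC₁ : (catalan (n + 1) : ℚ) = 2 * (2 * n + 1) / (n + 2) * catalan n := by
    rw [div_mul_eq_mul_div, eq_div_iff (by positivity)]
    exact_mod_cast (mul_comm _ _).trans (add_two_mul_catalan_succ n)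
  have hC₂ : (catalan (n + 2) : ℚ) = 2 * (2 * n + 3) / (n + 3) * catalan (n + 1) := by
    rw [div_mul_eq_mul_div, eq_div_iff (by positivity)]
    exact_mod_cast (mul_comm _ _).trans (add_two_mul_catalan_succ (n + 1))
  rw [hC₂, hC₁]
  field_simp
  ring
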